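/- There exists a universal constant $C>0$ with the following property. Let $\bar f:[0,1]\to[0,\infty)$ be continuously differentiable and concave with $\bar f(1)=0$, let $f:[0,1]\to\mathbb R$ be continuous with $|f|\le\bar f$ on $[0,1]$, let $n\ge 1$ be an integer and $r\in(0,1)$. Then $\Big| \frac{n^2}{r^{4n+2}}\int_0^r s^{8n-1}\Big(\int_s^1 \tau^{1-4n} f(\tau)\,d\tau\Big)ds \Big| \le C\Big(\sup_{\tau\in[0,r]}\bar f(\tau) + \frac{1}{n}\sup_{\tau\in[0,r]} \tau\,\bar f'(\tau)\Big).$ -/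

import Mathlib

/-!
Write `I(s) = ∫_s^1 τ^(1-4n) f(τ) dτ`, `M = sup_[0,r] f̄` and `D = sup_[0,r] τ f̄'(τ)`. On `[s, r]`
we bound `|f| ≤ M`; on `[r, 1]` we bound `|f|` by the tangent line of the concave `f̄` at `r`,
whose slope, where positive, is at most `D / r`. The tangent term contributes
`∫_r^1 τ^(1-4n) (τ - r) dτ ≤ r^(3-4n) / ((4n-2)(4n-3))`, which gains a second factor `1/n`, so
`|I(s)| ≤ M s^(2-4n) / (4n-2) + D r^(2-4n) / ((4n-2)(4n-3))`.
Integrating against `s^(8n-1)` over `[0, r]` and multiplying by `n² / r^(4n+2)` leaves at most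
`M / 12 + n D / (8 (4n-2)(4n-3)) ≤ M + D / n`, so `C = 1` works.
-/

open Real MeasureTheory Set intervalIntegral

theorem ConcaveOn.le_add_deriv_mul_sub {S : Set ℝ} {f : ℝ → ℝ} {x y : ℝ}
    (hf : ConcaveOn ℝ S f) (hx : x ∈ S) (hy : y ∈ S) (hfd : DifferentiableAt ℝ f x) :
    f y ≤ f x + deriv f x * (y - x) := by
  rcases lt_trichotomy x y with hxy | rfl | hyx
  · have h := hf.slope_le_deriv hx hy hxy hfd
    rw [slope_def_field, div_le_iff₀ (sub_pos.2 hxy)] at h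
    linarith
  · simp
  · have h := hf.deriv_le_slope hy hx hyx hfd
    rw [slope_def_field, le_div_iff₀ (sub_pos.2 hyx)] at h
    linarith

theorem integral_zpow_le_of_lt_neg_one {m : ℤ} (hm : m < -1) {s : ℝ} (hs : 0 < s) :
    ∫ τ in s..1, τ ^ m ≤ s ^ (m + 1) / -(m + 1 : ℝ) := by
  have hm' : 0 < -((m : ℝ) + 1) := by
    have : (m : ℝ) + 1 < 0 := by exact_mod_cast (by omega : m + 1 < 0)
    linarith
  rw [integral_zpow (Or.inr ⟨by omega, notMem_uIcc_of_lt hs one_pos⟩), one_zpow,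
    ← neg_div_neg_eq, neg_sub, div_le_div_iff_of_pos_right hm']
  linarith

theorem integral_zpow_mul_sub_le {m : ℤ} (hm : m < -2) {r : ℝ} (hr : 0 < r) (hr1 : r ≤ 1) :
    ∫ τ in r..1, τ ^ m * (τ - r) ≤ r ^ (m + 2) / ((m + 1) * (m + 2)) := by
  have h0 : (0:ℝ) ∉ uIcc r 1 := notMem_uIcc_of_lt hr one_pos
  have hsplit : ∫ τ in r..1, τ ^ m * (τ - r) = ∫ τ in r..1, (τ ^ (m + 1) - r * τ ^ m) := by
    refine integral_congr fun τ hτ => ?_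
    have hτ : τ ≠ 0 := fun h => h0 (h ▸ hτ)
    rw [zpow_add_one₀ hτ]; ring
  have h2 : (m : ℝ) + 2 < 0 := by exact_mod_cast (by omega : m + 2 < 0)
  have h1 : (m : ℝ) + 1 < 0 := by linarith
  have hpow : r ^ (m + 2) = r ^ (m + 1) * r := by
    rw [← zpow_add_one₀ hr.ne']; ring_nf
  have hexpand : ((1 - r ^ (m + 1) * r) / (m + 2) - r * ((1 - r ^ (m + 1)) / (m + 1)))
      * ((m + 1) * (m + 2)) = (m + 1) - r * (m + 2) + r ^ (m + 1) * r := by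
    field_simp [h1.ne, h2.ne]; ring
  rw [hsplit, integral_sub (intervalIntegrable_zpow (Or.inr h0))
      ((intervalIntegrable_zpow (Or.inr h0)).const_mul r), intervalIntegral.integral_const_mul,
    integral_zpow (Or.inr ⟨by omega, h0⟩), integral_zpow (Or.inr ⟨by omega, h0⟩), one_zpow,
    one_zpow, show m + 1 + 1 = m + 2 by ring, le_div_iff₀ (mul_pos_of_neg_of_neg h1 h2)]
  push_cast
  rw [show (m : ℝ) + 1 + 1 = m + 2 by ring, hpow, hexpand]
  nlinarith

theorem abs_integral_zpow_mul_le_of_tangent_bound {m : ℤ} (hm : m < -2) {f : ℝ → ℝ}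
    {s r M P : ℝ} (hs : 0 < s) (hsr : s ≤ r) (hr1 : r ≤ 1) (hM : 0 ≤ M) (hP : 0 ≤ P)
    (hf : ContinuousOn f (Icc s 1)) (hfM : ∀ τ ∈ Icc s r, |f τ| ≤ M)
    (hfP : ∀ τ ∈ Icc r 1, |f τ| ≤ M + P * (τ - r)) :
    |∫ τ in s..1, τ ^ m * f τ|
      ≤ M / -(m + 1 : ℝ) * s ^ (m + 1) + P * r ^ (m + 2) / ((m + 1) * (m + 2)) := by
  have hr : 0 < r := hs.trans_le hsr
  have hw : ∀ {a b : ℝ}, 0 < a → 0 < b → IntervalIntegrable (fun τ : ℝ => τ ^ m) volume a b :=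
    fun ha hb => intervalIntegrable_zpow (Or.inr (notMem_uIcc_of_lt ha hb))
  have hwf : ∀ {a b : ℝ}, s ≤ a → a ≤ b → b ≤ 1 →
      IntervalIntegrable (fun τ => τ ^ m * |f τ|) volume a b := fun hsa hab hb1 =>
    (hw (hs.trans_le hsa) (hs.trans_le (hsa.trans hab))).mul_continuousOn
      (hf.abs.mono (by rw [uIcc_of_le hab]; exact Icc_subset_Icc hsa hb1))
  have hwpos : ∀ τ ∈ Icc s 1, 0 < τ ^ m := fun τ hτ => zpow_pos (hs.trans_le hτ.1) m
  have habs : |∫ τ in s..1, τ ^ m * f τ| ≤ ∫ τ in s..1, τ ^ m * |f τ| := by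
    rw [← Real.norm_eq_abs]
    refine norm_integral_le_of_norm_le (hsr.trans hr1)
      (Filter.Eventually.of_forall fun τ hτ => ?_) (hwf le_rfl (hsr.trans hr1) le_rfl)
    rw [Real.norm_eq_abs, abs_mul, abs_of_pos (hwpos τ (Ioc_subset_Icc_self hτ))]
  have hwM : IntervalIntegrable (fun τ : ℝ => M * τ ^ m) volume r 1 := (hw hr one_pos).const_mul M
  have hwP : IntervalIntegrable (fun τ : ℝ => P * (τ ^ m * (τ - r))) volume r 1 :=
    ((hw hr one_pos).mul_continuousOn (continuousOn_id.sub continuousOn_const)).const_mul P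
  calc |∫ τ in s..1, τ ^ m * f τ| ≤ ∫ τ in s..1, τ ^ m * |f τ| := habs
    _ = (∫ τ in s..r, τ ^ m * |f τ|) + ∫ τ in r..1, τ ^ m * |f τ| :=
      (integral_add_adjacent_intervals (hwf le_rfl hsr hr1) (hwf hsr hr1 le_rfl)).symm
    _ ≤ (∫ τ in s..r, M * τ ^ m) + ∫ τ in r..1, (M * τ ^ m + P * (τ ^ m * (τ - r))) := by
      gcongr ?_ + ?_
      · refine integral_mono_on hsr (hwf le_rfl hsr hr1) ((hw hs hr).const_mul M) fun τ hτ => ?_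
        rw [mul_comm M]
        exact mul_le_mul_of_nonneg_left (hfM τ hτ) (hwpos τ ⟨hτ.1, hτ.2.trans hr1⟩).le
      · refine integral_mono_on hr1 (hwf hsr hr1 le_rfl) (hwM.add hwP) fun τ hτ => ?_
        have := mul_le_mul_of_nonneg_left (hfP τ hτ) (hwpos τ ⟨hsr.trans hτ.1, hτ.2⟩).le
        linarith
    _ = M * (∫ τ in s..1, τ ^ m) + P * ∫ τ in r..1, τ ^ m * (τ - r) := by
      rw [integral_add hwM hwP, ← integral_add_adjacent_intervals (hw hs hr) (hw hr one_pos)]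
      simp only [intervalIntegral.integral_const_mul]
      ring
    _ ≤ _ := by
      have hM' :=
        mul_le_mul_of_nonneg_left (integral_zpow_le_of_lt_neg_one (m := m) (by omega) hs) hM
      have hP' := mul_le_mul_of_nonneg_left (integral_zpow_mul_sub_le hm hr hr1) hP
      rw [div_mul_eq_mul_div, mul_div_assoc, mul_div_assoc]
      exact add_le_add hM' hP'

theorem abs_integral_zpow_mul_le_of_abs_le {k j : ℤ} (hk : 0 ≤ k) (hkj : 0 ≤ k + j)
    {g : ℝ → ℝ} {r A B : ℝ} (hr : 0 ≤ r) (hg : ∀ s ∈ Ioc 0 r, |g s| ≤ A * s ^ j + B) :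
    |∫ s in 0..r, s ^ k * g s|
      ≤ A * (r ^ (k + j + 1) / (k + j + 1)) + B * (r ^ (k + 1) / (k + 1)) := by
  have hkj' : IntervalIntegrable (fun s : ℝ => A * s ^ (k + j)) volume 0 r :=
    (intervalIntegrable_zpow (Or.inl hkj)).const_mul A
  have hk' : IntervalIntegrable (fun s : ℝ => B * s ^ k) volume 0 r :=
    (intervalIntegrable_zpow (Or.inl hk)).const_mul B
  rw [← Real.norm_eq_abs]
  calc ‖∫ s in 0..r, s ^ k * g s‖ ≤ ∫ s in 0..r, (A * s ^ (k + j) + B * s ^ k) := by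
        refine norm_integral_le_of_norm_le hr (Filter.Eventually.of_forall fun s hs => ?_)
          (hkj'.add hk')
        have hs0 : 0 < s ^ k := zpow_pos hs.1 k
        rw [Real.norm_eq_abs, abs_mul, abs_of_pos hs0, zpow_add₀ hs.1.ne']
        nlinarith [mul_le_mul_of_nonneg_left (hg s hs) hs0.le]
    _ = _ := by
        rw [integral_add hkj' hk', intervalIntegral.integral_const_mul,
          intervalIntegral.integral_const_mul, integral_zpow (Or.inl hkj),
          integral_zpow (Or.inl hk), zero_zpow _ (by omega), zero_zpow _ (by omega), sub_zero,
          sub_zero]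
        push_cast
        rfl

theorem exists_tangent_majorant {fbar f : ℝ → ℝ} {r : ℝ}
    (hdiff : ∀ x ∈ Icc (0:ℝ) 1, DifferentiableAt ℝ fbar x)
    (hderiv : ContinuousOn (deriv fbar) (Icc 0 1)) (hconc : ConcaveOn ℝ (Icc 0 1) fbar)
    (hf : ∀ x ∈ Icc (0:ℝ) 1, |f x| ≤ fbar x) (hr : r ∈ Icc (0:ℝ) 1) :
    ∃ P, 0 ≤ P ∧ P * r ≤ sSup ((fun τ => τ * deriv fbar τ) '' Icc 0 r) ∧
      (∀ τ ∈ Icc 0 r, |f τ| ≤ sSup (fbar '' Icc 0 r)) ∧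
      ∀ τ ∈ Icc r 1, |f τ| ≤ sSup (fbar '' Icc 0 r) + P * (τ - r) := by
  have hsub : Icc 0 r ⊆ Icc (0:ℝ) 1 := Icc_subset_Icc le_rfl hr.2
  have hcont : ContinuousOn fbar (Icc 0 r) := fun x hx =>
    (hdiff x (hsub hx)).continuousAt.continuousWithinAt
  have hfbarM : ∀ τ ∈ Icc 0 r, fbar τ ≤ sSup (fbar '' Icc 0 r) := fun τ hτ =>
    hcont.le_sSup_image_Icc hτ
  have hD : ∀ τ ∈ Icc 0 r, τ * deriv fbar τ ≤ sSup ((fun τ => τ * deriv fbar τ) '' Icc 0 r) :=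
    fun τ hτ => (continuousOn_id.mul (hderiv.mono hsub)).le_sSup_image_Icc hτ
  refine ⟨max (deriv fbar r) 0, le_max_right _ _, ?_,
    fun τ hτ => (hf τ (hsub hτ)).trans (hfbarM τ hτ), fun τ hτ => ?_⟩
  · rcases le_total (deriv fbar r) 0 with h | h
    · simpa [h] using hD 0 (left_mem_Icc.2 hr.1)
    · simpa [h, mul_comm] using hD r (right_mem_Icc.2 hr.1)
  · have hτ' : τ ∈ Icc (0:ℝ) 1 := ⟨hr.1.trans hτ.1, hτ.2⟩
    have htan := hconc.le_add_deriv_mul_sub hr hτ' (hdiff r hr)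
    have hslope := mul_le_mul_of_nonneg_right (le_max_left (deriv fbar r) 0) (sub_nonneg.2 hτ.1)
    linarith [hf τ hτ', hfbarM r (right_mem_Icc.2 hr.1)]

-- Applied with `u = r^(4n+2)`, `v = P r^(3-4n)`, `w = r^(8n)` and `x = P r`.
theorem rescaled_bound_le {N M D u v w x : ℝ} (hN : 1 ≤ N) (hM : 0 ≤ M) (hx : 0 ≤ x)
    (hxD : x ≤ D) (hu : 0 < u) (hvw : v * w = u * x) :
    N ^ 2 / u * (M / (4 * N - 2) * (u / (4 * N + 2))
      + v / ((4 * N - 2) * (4 * N - 3)) * (w / (8 * N))) ≤ M + 1 / N * D := by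
  have h2 : 0 < 4 * N - 2 := by linarith
  have h3 : 0 < 4 * N - 3 := by linarith
  have hsplit : N ^ 2 / u * (M / (4 * N - 2) * (u / (4 * N + 2))
      + v / ((4 * N - 2) * (4 * N - 3)) * (w / (8 * N)))
      = N ^ 2 / ((4 * N - 2) * (4 * N + 2)) * M + N / (8 * (4 * N - 2) * (4 * N - 3)) * x := by
    rw [div_mul_div_comm v, hvw]
    field_simp
  have hMc : N ^ 2 / ((4 * N - 2) * (4 * N + 2)) ≤ 1 := by
    rw [div_le_one (by positivity)]; nlinarith
  have hDc : N / (8 * (4 * N - 2) * (4 * N - 3)) ≤ 1 / N := by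
    rw [div_le_div_iff₀ (by positivity) (by positivity)]; nlinarith
  rw [hsplit]
  gcongr ?_ + ?_
  · exact mul_le_of_le_one_left hM hMc
  · exact mul_le_mul hDc hxD hx (by positivity)

theorem stmt6 :
    ∃ C > (0:ℝ), ∀ (fbar : ℝ → ℝ),
      (∀ r ∈ Set.Icc (0:ℝ) 1, 0 ≤ fbar r) →
      (∀ x ∈ Set.Icc (0:ℝ) 1, DifferentiableAt ℝ fbar x) →
      ContinuousOn (deriv fbar) (Set.Icc 0 1) →
      ConcaveOn ℝ (Set.Icc 0 1) fbar →
      fbar 1 = 0 →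
      ∀ (f : ℝ → ℝ), ContinuousOn f (Set.Icc 0 1) →
      (∀ r ∈ Set.Icc (0:ℝ) 1, |f r| ≤ fbar r) →
      ∀ (n : ℕ), 1 ≤ n → ∀ r ∈ Set.Ioo (0:ℝ) 1,
        |((n:ℝ) ^ 2 / r ^ (4 * (n:ℤ) + 2)) *
            ∫ s in (0:ℝ)..r, s ^ (8 * (n:ℤ) - 1) * ∫ τ in s..(1:ℝ), τ ^ (1 - 4 * (n:ℤ)) * f τ|
          ≤ C * (sSup (fbar '' Set.Icc 0 r) + (1 / (n:ℝ)) *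
              sSup ((fun τ => τ * deriv fbar τ) '' Set.Icc 0 r)) := by
  refine ⟨1, one_pos, fun fbar _ hdiff hderiv hconc _ f hf hffbar n hn r ⟨hr0, hr1⟩ => ?_⟩
  obtain ⟨P, hP, hPD, hfM, hftangent⟩ :=
    exists_tangent_majorant hdiff hderiv hconc hffbar ⟨hr0.le, hr1.le⟩
  have hM := (abs_nonneg _).trans (hfM 0 (left_mem_Icc.2 hr0.le))
  have hinner := fun s (hs : s ∈ Ioc 0 r) =>
    abs_integral_zpow_mul_le_of_tangent_bound (m := 1 - 4 * (n:ℤ)) (by omega) hs.1 hs.2 hr1.le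
      hM hP (hf.mono (Icc_subset_Icc hs.1.le le_rfl))
      (fun τ hτ => hfM τ ⟨hs.1.le.trans hτ.1, hτ.2⟩) hftangent
  have houter := abs_integral_zpow_mul_le_of_abs_le (k := 8 * (n:ℤ) - 1) (by omega) (by omega)
    hr0.le hinner
  rw [abs_mul, abs_of_pos (by positivity), one_mul]
  refine (mul_le_mul_of_nonneg_left houter (by positivity)).trans ?_
  have hvw : P * r ^ (1 - 4 * (n:ℤ) + 2) * r ^ (8 * (n:ℤ) - 1 + 1)
      = r ^ (4 * (n:ℤ) + 2) * (P * r) := by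
    rw [mul_assoc, ← zpow_add₀ hr0.ne', mul_left_comm, ← zpow_add_one₀ hr0.ne']
    ring_nf
  push_cast
  rw [show 8 * (n:ℤ) - 1 + (1 - 4 * n + 1) + 1 = 4 * n + 2 by ring,
    show -(1 - 4 * (n:ℝ) + 1) = 4 * n - 2 by ring,
    show 8 * (n:ℝ) - 1 + (1 - 4 * n + 1) + 1 = 4 * n + 2 by ring,
    show (1 - 4 * (n:ℝ) + 1) * (1 - 4 * n + 2) = (4 * n - 2) * (4 * n - 3) by ring,
    show 8 * (n:ℝ) - 1 + 1 = 8 * n by ring]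
  exact rescaled_bound_le (by exact_mod_cast hn) hM (by positivity) hPD (zpow_pos hr0 _) hvw
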